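/- Let r, n ≥ 1 be integers, let S = ℂ[[t₁,…,tₙ]], and for i = 1,…,n let Aᵢ ∈ M_r(S) (matrices independent of z). Suppose B ∈ M_r(S[[z]]) satisfies 0 = z·∂_{tᵢ}B + z·Aᵢ + [Aᵢ, B] for all i = 1,…,n, and the evaluation of B at t₁ = ⋯ = tₙ = 0 equals B₀ + z·B₁ for constant matrices B₀, B₁ ∈ M_r(ℂ). Then, writing B = Σ_{k≥0} B^{(k)} z^k with B^{(k)} ∈ M_r(S), one has B^{(k)} = 0 for all k ≥ 2 and B^{(1)} = B₁ (a constant matrix); i.e. B = B^{(0)} + z·B₁ with B^{(0)} ∈ M_r(S). -/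

import Mathlib

open Matrix

noncomputable section

/-- `S = ℂ[[t₁,…,tₙ]]`. -/
abbrev S (n : ℕ) : Type := MvPowerSeries (Fin n) ℂ

/-- `S[[z]] = ℂ[[t₁,…,tₙ]][[z]]`. -/
abbrev SZ (n : ℕ) : Type := PowerSeries (S n)

/-- Formal partial derivative `∂/∂tᵢ` on `ℂ[[t₁,…,tₙ]]`. -/
def pd {n : ℕ} (i : Fin n) (f : S n) : S n :=
  fun d => ((d i : ℂ) + 1) * MvPowerSeries.coeff (R := ℂ) (d + Finsupp.single i 1) f

/-- Formal partial derivative `∂/∂tᵢ` on `S[[z]]`, acting coefficientwise. -/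
def pdZ {n : ℕ} (i : Fin n) (f : SZ n) : SZ n :=
  PowerSeries.mk fun k => pd i (PowerSeries.coeff (R := S n) k f)

/-- Entrywise formal partial derivative `∂/∂tᵢ` on matrices over `S[[z]]`. -/
def pdM {n r : ℕ} (i : Fin n) (X : Matrix (Fin r) (Fin r) (SZ n)) :
    Matrix (Fin r) (Fin r) (SZ n) := X.map (pdZ i)

/-- The inclusion `S → S[[z]]` of `z`-independent series. -/
def liftS {n : ℕ} : S n →+* SZ n := PowerSeries.C (R := S n)

/-- Evaluation at `t₁ = ⋯ = tₙ = 0`, i.e. the map `S[[z]] → ℂ[[z]]`. -/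
def evalT {n : ℕ} : SZ n →+* PowerSeries ℂ :=
  PowerSeries.map (MvPowerSeries.constantCoeff (σ := Fin n) (R := ℂ))

/-- Complex constants in `S[[z]]`. -/
def constS {n : ℕ} : ℂ →+* SZ n := liftS.comp (MvPowerSeries.C (σ := Fin n) (R := ℂ))

namespace TLEaux

/-- Total degree of a multi-index. -/
def deg {n : ℕ} (d : Fin n →₀ ℕ) : ℕ := d.sum fun _ v => v

lemma deg_add {n : ℕ} (a b : Fin n →₀ ℕ) : deg (a + b) = deg a + deg b :=
  Finsupp.sum_add_index' (fun _ => rfl) (fun _ _ _ => rfl)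

lemma le_deg {n : ℕ} (d : Fin n →₀ ℕ) (i : Fin n) : d i ≤ deg d := by
  classical
  by_cases h : i ∈ d.support
  · exact Finset.single_le_sum (fun j _ => Nat.zero_le _) h
  · simp [deg, Finsupp.notMem_support_iff.mp h]

lemma deg_eq_zero {n : ℕ} {d : Fin n →₀ ℕ} (h : deg d = 0) : d = 0 := by
  ext i
  have := le_deg d i
  simp only [Finsupp.coe_zero, Pi.zero_apply]
  omega

lemma sub_add_single {n : ℕ} (d : Fin n →₀ ℕ) (i : Fin n) (h : d i ≠ 0) :
    d - Finsupp.single i 1 + Finsupp.single i 1 = d := by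
  ext j
  simp only [Finsupp.add_apply, Finsupp.tsub_apply, Finsupp.single_apply]
  rcases eq_or_ne i j with rfl | hij
  · simp; omega
  · simp [hij]

lemma deg_sub_single {n : ℕ} (d : Fin n →₀ ℕ) (i : Fin n) (h : d i ≠ 0) :
    deg (d - Finsupp.single i 1) + 1 = deg d := by
  have h1 : deg (Finsupp.single i 1) = 1 := by
    simp [deg]
  conv_rhs => rw [← sub_add_single d i h, deg_add, h1]

lemma coeff_pd {n : ℕ} (i : Fin n) (f : S n) (d : Fin n →₀ ℕ) :
    MvPowerSeries.coeff (R := ℂ) d (pd i f)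
      = ((d i : ℂ) + 1) * MvPowerSeries.coeff (R := ℂ) (d + Finsupp.single i 1) f := rfl

/-- A multivariate power series with vanishing partials is constant. -/
lemma eq_C_of_pd_eq_zero {n : ℕ} (f : S n) (c : ℂ)
    (h0 : MvPowerSeries.constantCoeff (σ := Fin n) (R := ℂ) f = c)
    (hp : ∀ i, pd i f = 0) : f = MvPowerSeries.C (σ := Fin n) (R := ℂ) c := by
  ext d
  rcases eq_or_ne d 0 with rfl | hd
  · simpa [MvPowerSeries.coeff_zero_eq_constantCoeff] using h0
  · obtain ⟨i, hi⟩ : ∃ i, d i ≠ 0 := by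
      obtain ⟨i, hi⟩ := Finsupp.support_nonempty_iff.mpr hd
      exact ⟨i, Finsupp.mem_support_iff.mp hi⟩
    have h := congrArg (MvPowerSeries.coeff (R := ℂ) (d - Finsupp.single i 1)) (hp i)
    rw [coeff_pd, sub_add_single d i hi, map_zero] at h
    have hne : ((((d - Finsupp.single i 1) : Fin n →₀ ℕ) i : ℂ) + 1) ≠ 0 := by
      exact Nat.cast_add_one_ne_zero _
    have : MvPowerSeries.coeff (R := ℂ) d f = 0 := by
      rcases mul_eq_zero.mp h with h' | h'
      · exact absurd h' hne
      · exact h'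
    rw [this, MvPowerSeries.coeff_C, if_neg hd]

end TLEaux

/-- **Inductive claim in the proof of Theorem 5.1(c) of David–Hertling.** If
`Aᵢ ∈ M_r(ℂ[[t₁,…,tₙ]])` are `z`-independent matrices and `B ∈ M_r(S[[z]])` satisfies
`0 = z∂ᵢB + zAᵢ + [Aᵢ, B]` for all `i`, and `B` evaluated at `t = 0` equals `B₀ + z·B₁`
with constant matrices `B₀, B₁ ∈ M_r(ℂ)`, then `B^{(k)} = 0` for all `k ≥ 2` and
`B^{(1)} = B₁` is constant; i.e. `B = B^{(0)} + z·B₁`. -/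
theorem TLE_extension_rigidity (r n : ℕ) (hr : 1 ≤ r) (hn : 1 ≤ n)
    (A : Fin n → Matrix (Fin r) (Fin r) (S n))
    (B : Matrix (Fin r) (Fin r) (SZ n)) (B₀ B₁ : Matrix (Fin r) (Fin r) ℂ)
    (hB : ∀ i : Fin n,
      (PowerSeries.X : SZ n) • pdM i B + (PowerSeries.X : SZ n) • (A i).map liftS
        + ((A i).map liftS * B - B * (A i).map liftS) = 0)
    (h0 : B.map evalT
        = B₀.map (PowerSeries.C (R := ℂ)) + (PowerSeries.X : PowerSeries ℂ) • B₁.map (PowerSeries.C (R := ℂ))) :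
    (∀ k : ℕ, 2 ≤ k → B.map (PowerSeries.coeff (R := S n) k) = 0) ∧
    B.map (PowerSeries.coeff (R := S n) 1) = B₁.map (MvPowerSeries.C (σ := Fin n) (R := ℂ)) := by
  classical
  open TLEaux in
  -- scalar coefficient equations, z-degree k+2
  have key : ∀ (i : Fin n) (k : ℕ) (a b : Fin r),
      pd i (PowerSeries.coeff (R := S n) (k+1) (B a b))
        + ((∑ c, A i a c * PowerSeries.coeff (R := S n) (k+2) (B c b))
          - ∑ c, PowerSeries.coeff (R := S n) (k+2) (B a c) * A i c b) = 0 := by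
    intro i k a b
    have h := congrArg (fun M => PowerSeries.coeff (R := S n) (k+2) (M a b)) (hB i)
    simpa [pdM, pdZ, liftS, Matrix.add_apply, Matrix.mul_apply, Matrix.sub_apply,
      Matrix.map_apply, Matrix.smul_apply, smul_eq_mul, PowerSeries.coeff_succ_X_mul,
      PowerSeries.coeff_mk, PowerSeries.coeff_C, PowerSeries.coeff_X, PowerSeries.coeff_C_mul,
      PowerSeries.coeff_mul_C, Finset.sum_sub_distrib] using h
  -- boundary condition at t = 0
  have bd : ∀ (k : ℕ) (a b : Fin r),
      MvPowerSeries.constantCoeff (σ := Fin n) (R := ℂ) (PowerSeries.coeff (R := S n) (k+1) (B a b))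
        = if k = 0 then B₁ a b else 0 := by
    intro k a b
    have h := congrArg (fun M => PowerSeries.coeff (R := ℂ) (k+1) (M a b)) h0
    simpa [evalT, Matrix.map_apply, Matrix.add_apply, Matrix.smul_apply, smul_eq_mul,
      PowerSeries.coeff_map, PowerSeries.coeff_C, PowerSeries.coeff_X, PowerSeries.coeff_succ_X_mul] using h
  -- vanishing of coefficients of z-degree ≥ 2, by induction on t-degree
  have vanish : ∀ (m : ℕ) (d : Fin n →₀ ℕ), deg d ≤ m → ∀ (k : ℕ) (a b : Fin r),
      MvPowerSeries.coeff (R := ℂ) d (PowerSeries.coeff (R := S n) (k+2) (B a b)) = 0 := by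
    intro m
    induction m with
    | zero =>
      intro d hd k a b
      have hd0 : d = 0 := deg_eq_zero (Nat.le_zero.mp hd)
      subst hd0
      rw [MvPowerSeries.coeff_zero_eq_constantCoeff]
      simpa using bd (k+1) a b
    | succ m ih =>
      intro d hd k a b
      rcases eq_or_ne d 0 with rfl | hdne
      · rw [MvPowerSeries.coeff_zero_eq_constantCoeff]
        simpa using bd (k+1) a b
      obtain ⟨i, hi⟩ : ∃ i, d i ≠ 0 := by
        obtain ⟨i, hi⟩ := Finsupp.support_nonempty_iff.mpr hdne
        exact ⟨i, Finsupp.mem_support_iff.mp hi⟩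
      set d' := d - Finsupp.single i 1 with hd'
      have hdd : d' + Finsupp.single i 1 = d := sub_add_single d i hi
      have hdeg : deg d' ≤ m := by
        have h2 := deg_sub_single d i hi
        rw [← hd'] at h2
        omega
      have h := congrArg (MvPowerSeries.coeff (R := ℂ) d') (key i (k+1) a b)
      have hz : ∀ (c : Fin r),
          MvPowerSeries.coeff (R := ℂ) d' (A i a c * PowerSeries.coeff (R := S n) (k+3) (B c b)) = 0 := by
        intro c
        rw [MvPowerSeries.coeff_mul]
        refine Finset.sum_eq_zero fun p hp => ?_
        have hps := Finset.HasAntidiagonal.mem_antidiagonal.mp hp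
        have : deg p.2 ≤ m := by
          have := deg_add p.1 p.2
          rw [hps] at this
          omega
        rw [ih p.2 this k.succ c b]
        ring
      have hz' : ∀ (c : Fin r),
          MvPowerSeries.coeff (R := ℂ) d' (PowerSeries.coeff (R := S n) (k+3) (B a c) * A i c b) = 0 := by
        intro c
        rw [MvPowerSeries.coeff_mul]
        refine Finset.sum_eq_zero fun p hp => ?_
        have hps := Finset.HasAntidiagonal.mem_antidiagonal.mp hp
        have : deg p.1 ≤ m := by
          have := deg_add p.1 p.2
          rw [hps] at this
          omega
        rw [ih p.1 this k.succ a c]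
        ring
      rw [map_add, map_sub, map_sum, map_sum, Finset.sum_eq_zero (fun c _ => hz c),
        Finset.sum_eq_zero (fun c _ => hz' c), sub_zero, add_zero, map_zero,
        coeff_pd, hdd] at h
      have hne : ((d' i : ℂ) + 1) ≠ 0 := Nat.cast_add_one_ne_zero _
      rcases mul_eq_zero.mp h with h' | h'
      · exact absurd h' hne
      · exact h'
  have hBk : ∀ (k : ℕ) (a b : Fin r), PowerSeries.coeff (R := S n) (k+2) (B a b) = 0 := by
    intro k a b
    ext d
    rw [map_zero]
    exact vanish (deg d) d le_rfl k a b
  constructor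
  · intro k hk
    obtain ⟨j, rfl⟩ : ∃ j, k = j + 2 := ⟨k - 2, by omega⟩
    ext a b
    simp [Matrix.map_apply, hBk j a b]
  · refine Matrix.ext fun a b => ?_
    simp only [Matrix.map_apply]
    refine eq_C_of_pd_eq_zero _ _ (by simpa using bd 0 a b) fun i => ?_
    have h := key i 0 a b
    simp only [hBk 0, mul_zero, zero_mul, Finset.sum_const_zero, sub_zero, add_zero] at h
    exact h

end
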